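/- arXiv:2111.08838 — 2 statements merged into one kernel-verified Lean document; each statement's English description precedes it below -/
import Mathlib

section
/- For all positive integers n and m with not (n = 1 and m = 1), the corona graph P_n ∘ P_m is total edge product cordial; that is, there exists an edge labeling f* : E(P_n ∘ P_m) → {0,1} whose induced vertex labeling f satisfies |(v_f(0) + e_f(0)) − (v_f(1) + e_f(1))| ≤ 1. -/
open scoped Classical
open Finset SimpleGraph

/-- Adjacency relation of the corona product `G ∘ H`: take one copy of `G` and,
for each vertex `i` of `G`, a copy of `H` (indexed by `i`), joining `i` to every
vertex of its copy of `H`. -/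
def coronaAdj {α β : Type*} (G : SimpleGraph α) (H : SimpleGraph β) :
    α ⊕ α × β → α ⊕ α × β → Prop
  | Sum.inl u, Sum.inl v => G.Adj u v
  | Sum.inl u, Sum.inr (i, _) => u = i
  | Sum.inr (i, _), Sum.inl u => u = i
  | Sum.inr (i, x), Sum.inr (j, y) => i = j ∧ H.Adj x y

/-- The corona product `G ∘ H` of two simple graphs. -/
def corona {α β : Type*} (G : SimpleGraph α) (H : SimpleGraph β) :
    SimpleGraph (α ⊕ α × β) where
  Adj := coronaAdj G H
  symm := by
    constructor
    rintro (u | ⟨i, x⟩) (v | ⟨j, y⟩) h <;>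
      simp only [coronaAdj] at h ⊢
    · exact h.symm
    · exact h
    · exact h
    · exact ⟨h.1.symm, h.2.symm⟩
  loopless := by
    constructor
    rintro (u | ⟨i, x⟩) h <;> simp only [coronaAdj] at h
    · exact G.irrefl h
    · exact H.irrefl h.2

/-- The vertex labeling induced by an edge labeling `f`: the label of `v` is the
product of the labels of the edges incident to `v` (an empty product is `1`). -/
noncomputable def inducedLabel {α : Type*} [Fintype α] (G : SimpleGraph α)
    (f : Sym2 α → ℕ) (v : α) : ℕ :=
  ∏ u ∈ Finset.univ.filter (fun u => G.Adj v u), f s(v, u)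

/-- `eCount G f i` is the number of edges of `G` labeled `i` by `f`. -/
noncomputable def eCount {α : Type*} [Fintype α] (G : SimpleGraph α)
    (f : Sym2 α → ℕ) (i : ℕ) : ℕ :=
  (G.edgeFinset.filter (fun e => f e = i)).card

/-- `vCount G f i` is the number of vertices of `G` whose induced label is `i`. -/
noncomputable def vCount {α : Type*} [Fintype α] (G : SimpleGraph α)
    (f : Sym2 α → ℕ) (i : ℕ) : ℕ :=
  (Finset.univ.filter (fun v => inducedLabel G f v = i)).card

/-- `f` is a total edge product cordial labeling of `G`: it labels every edge `0` or `1`,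
and `|(v_f(0) + e_f(0)) - (v_f(1) + e_f(1))| ≤ 1`. -/
def IsTotalEdgeProductCordialLabeling {α : Type*} [Fintype α] (G : SimpleGraph α)
    (f : Sym2 α → ℕ) : Prop :=
  (∀ e ∈ G.edgeSet, f e = 0 ∨ f e = 1) ∧
  |((vCount G f 0 : ℤ) + (eCount G f 0 : ℤ)) - ((vCount G f 1 : ℤ) + (eCount G f 1 : ℤ))| ≤ 1

/-- `G` is total edge product cordial if it admits a total edge product cordial labeling. -/
def IsTotalEdgeProductCordial {α : Type*} [Fintype α] (G : SimpleGraph α) : Prop :=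
  ∃ f : Sym2 α → ℕ, IsTotalEdgeProductCordialLabeling G f


/-!
Putting `0` on the edges of a subgraph `H ≤ G` and `1` elsewhere labels `0` exactly the vertices in
the support of `H`, so `v_f(0) + e_f(0) = |supp H| + |E(H)|`, and it suffices to find `H` with
`|2 (|supp H| + |E(H)|) - N| ≤ 1`, where `N = |V| + |E|`. In a connected graph a nonempty proper
subgraph can always be enlarged by an edge at its support, which raises `|supp H| + |E(H)|` by `1`
or `2`; starting from a single edge this meets every pair of consecutive values from `3` to `N`,
which settles odd `N`. For even `N` one starts from a triangle instead and, on overshooting by one,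
deletes a triangle edge, which lowers the count by exactly one without changing the support. For
`P_n ∘ P_m` one has `N = n (3m + 1) - 1`, which is even only if `m` is even, and then the corona
contains triangles.
-/

namespace SimpleGraph

variable {V : Type*}

/-- `v_f(0) + e_f(0)` for the labeling that puts `0` exactly on the edges of `H`. -/
noncomputable def totalCard (H : SimpleGraph V) : ℕ := H.support.ncard + H.edgeSet.ncard

section Labeling

variable [Fintype V] {G H : SimpleGraph V}

noncomputable def zeroOnLabeling (H : SimpleGraph V) (e : Sym2 V) : ℕ :=
  if e ∈ H.edgeSet then 0 else 1

lemma inducedLabel_zeroOnLabeling (hHG : H ≤ G) (v : V) :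
    inducedLabel G H.zeroOnLabeling v = if v ∈ H.support then 0 else 1 := by
  unfold inducedLabel
  split_ifs with hv
  · obtain ⟨u, hu⟩ := H.mem_support.mp hv
    exact prod_eq_zero (by simpa using hHG hu) (by simp [zeroOnLabeling, hu])
  · refine prod_eq_one fun u _ => ?_
    have : ¬ H.Adj v u := fun h => hv ⟨u, h⟩
    simp [zeroOnLabeling, this]

lemma vCount_zeroOnLabeling_zero (hHG : H ≤ G) :
    vCount G H.zeroOnLabeling 0 = H.support.ncard := by
  rw [vCount, ← Set.ncard_coe_finset]
  congr
  ext v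
  simp [inducedLabel_zeroOnLabeling hHG, mem_support_iff_not_isIsolated]

lemma vCount_zeroOnLabeling_one (hHG : H ≤ G) :
    vCount G H.zeroOnLabeling 1 = H.supportᶜ.ncard := by
  rw [vCount, ← Set.ncard_coe_finset]
  congr
  ext v
  simp [inducedLabel_zeroOnLabeling hHG]

lemma eCount_zeroOnLabeling_zero (hHG : H ≤ G) :
    eCount G H.zeroOnLabeling 0 = H.edgeSet.ncard := by
  rw [eCount, ← Set.ncard_coe_finset]
  congr
  ext e
  simp only [coe_filter, mem_edgeFinset, zeroOnLabeling, ite_eq_left_iff, one_ne_zero, imp_false,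
    not_not, Set.mem_ofPred_eq]
  exact ⟨And.right, fun he => ⟨edgeSet_mono hHG he, he⟩⟩

lemma eCount_zeroOnLabeling_one :
    eCount G H.zeroOnLabeling 1 = (G.edgeSet \ H.edgeSet).ncard := by
  rw [eCount, ← Set.ncard_coe_finset]
  congr
  ext e
  simp [zeroOnLabeling]

theorem isTotalEdgeProductCordial_of_le (hHG : H ≤ G)
    (h : |2 * (H.totalCard : ℤ) - (Nat.card V + G.edgeSet.ncard)| ≤ 1) :
    IsTotalEdgeProductCordial G := by
  refine ⟨H.zeroOnLabeling, fun e _ => ?_, ?_⟩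
  · unfold zeroOnLabeling
    split_ifs <;> simp
  have hV := Set.ncard_add_ncard_compl H.support
  have hE := Set.ncard_sdiff_add_ncard_of_subset (edgeSet_mono hHG) (Set.toFinite _)
  rw [vCount_zeroOnLabeling_zero hHG, vCount_zeroOnLabeling_one hHG,
    eCount_zeroOnLabeling_zero hHG, eCount_zeroOnLabeling_one]
  rw [totalCard] at h
  convert h using 2
  push_cast
  omega

end Labeling

section Growth

variable {G H H' : SimpleGraph V} {a b c x y : V}

lemma totalCard_mono [Finite V] (h : H ≤ H') : H.totalCard ≤ H'.totalCard :=
  add_le_add (Set.ncard_le_ncard (support_mono h)) (Set.ncard_le_ncard (edgeSet_mono h))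

lemma Preconnected.totalCard_eq [Nontrivial V] (hG : G.Preconnected) :
    G.totalCard = Nat.card V + G.edgeSet.ncard := by
  rw [totalCard, hG.support_eq_univ, Set.ncard_univ]

lemma totalCard_edge (h : a ≠ b) : (edge a b).totalCard = 3 := by
  have hsupp : (edge a b).support = {a, b} := by
    ext v
    simp only [mem_support, edge_adj, Set.mem_insert_iff, Set.mem_singleton_iff]
    constructor
    · rintro ⟨w, (⟨rfl, -⟩ | ⟨rfl, -⟩), -⟩ <;> simp
    · rintro (rfl | rfl)
      exacts [⟨b, Or.inl ⟨rfl, rfl⟩, h⟩, ⟨a, Or.inr ⟨rfl, rfl⟩, h.symm⟩]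
  rw [totalCard, hsupp, edgeSet_edge_of_ne h, Set.ncard_pair h, Set.ncard_singleton]

lemma totalCard_lt_sup_edge [Finite V] (hxy : x ≠ y) (hH : ¬ H.Adj x y) :
    H.totalCard < (H ⊔ edge x y).totalCard :=
  add_lt_add_of_le_of_lt (Set.ncard_le_ncard (support_mono le_sup_left))
    (Set.ncard_lt_ncard (edgeSet_ssubset_edgeSet.mpr (H.lt_sup_edge x y hxy hH)))

lemma totalCard_sup_edge_le [Finite V] (hx : x ∈ H.support) :
    (H ⊔ edge x y).totalCard ≤ H.totalCard + 2 := by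
  have hsupp : (H ⊔ edge x y).support ⊆ insert y H.support := by
    intro v hv
    obtain ⟨w, hw⟩ := (H ⊔ edge x y).mem_support.mp hv
    rw [sup_adj, edge_adj] at hw
    rcases hw with hw | ⟨⟨rfl, -⟩ | ⟨rfl, -⟩, -⟩
    exacts [Or.inr hw.mem_support_left, Or.inr hx, Or.inl rfl]
  have hedge : (H ⊔ edge x y).edgeSet ⊆ insert s(x, y) H.edgeSet := by
    rw [edgeSet_sup, Set.insert_eq, Set.union_comm]
    exact Set.union_subset_union_left _ edgeSet_edge_subset
  have := (Set.ncard_le_ncard hsupp).trans (Set.ncard_insert_le _ _)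
  have := (Set.ncard_le_ncard hedge).trans (Set.ncard_insert_le _ _)
  rw [totalCard, totalCard]
  omega

lemma exists_adj_not_adj_of_lt (hG : G.Preconnected) (hHG : H < G) (hH : H.support.Nonempty) :
    ∃ x ∈ H.support, ∃ y, G.Adj x y ∧ ¬ H.Adj x y := by
  by_contra! hclosed
  obtain ⟨a, b, hab, hHab⟩ : ∃ a b, G.Adj a b ∧ ¬ H.Adj a b := by
    simpa [le_iff_adj] using hHG.not_ge
  have ha : a ∉ H.support := fun ha => hHab (hclosed a ha b hab)
  obtain ⟨z, hz⟩ := hH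
  obtain ⟨d, -, hd, hd'⟩ := (hG z a).some.exists_boundary_dart H.support hz ha
  exact hd' (hclosed _ hd _ d.adj).symm.mem_support_left

theorem exists_le_totalCard_le [Finite V] (hG : G.Preconnected) {H₀ : SimpleGraph V} (h₀ : H₀ ≤ G)
    (hH₀ : H₀.support.Nonempty) {t : ℕ} (ht₀ : H₀.totalCard ≤ t + 1) (ht : t ≤ G.totalCard) :
    ∃ H, H₀ ≤ H ∧ H ≤ G ∧ t ≤ H.totalCard ∧ H.totalCard ≤ t + 1 := by
  obtain ⟨H, ⟨h₀H, hHG, hHt⟩, hmax⟩ := Set.exists_max_image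
    {H | H₀ ≤ H ∧ H ≤ G ∧ H.totalCard ≤ t + 1} totalCard (Set.toFinite _) ⟨H₀, le_rfl, h₀, ht₀⟩
  refine ⟨H, h₀H, hHG, ?_, hHt⟩
  by_contra! hlt
  have hHG' : H < G := hHG.lt_of_ne (by rintro rfl; omega)
  obtain ⟨x, hx, y, hxy, hHxy⟩ := exists_adj_not_adj_of_lt hG hHG' (hH₀.mono (support_mono h₀H))
  have hgrow := totalCard_lt_sup_edge hxy.ne hHxy
  have hstep := totalCard_sup_edge_le (y := y) hx
  have := hmax (H ⊔ edge x y)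
    ⟨h₀H.trans le_sup_left, sup_le hHG ((edge_le_iff G).mpr (Or.inr hxy)), by omega⟩
  omega

lemma totalCard_triangle (hab : a ≠ b) (hbc : b ≠ c) (hca : c ≠ a) :
    (edge a b ⊔ edge b c ⊔ edge c a).totalCard = 6 := by
  have hsupp : (edge a b ⊔ edge b c ⊔ edge c a).support = {a, b, c} := by
    ext v
    simp only [mem_support, sup_adj, edge_adj, Set.mem_insert_iff, Set.mem_singleton_iff]
    constructor
    · rintro ⟨w, hw⟩
      grind
    · rintro (rfl | rfl | rfl)
      exacts [⟨b, by simp [hab]⟩, ⟨c, by simp [hbc]⟩, ⟨a, by simp [hca]⟩]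
  have hedge : (edge a b ⊔ edge b c ⊔ edge c a).edgeSet = {s(a, b), s(b, c), s(c, a)} := by
    simp only [edgeSet_sup, edgeSet_edge_of_ne hab, edgeSet_edge_of_ne hbc,
      edgeSet_edge_of_ne hca, Set.insert_eq, Set.union_assoc]
  rw [totalCard, hsupp, hedge, Set.ncard_eq_three.mpr ⟨_, _, _, hab, hca.symm, hbc, rfl⟩,
    Set.ncard_eq_three.mpr ⟨_, _, _, ?_, ?_, ?_, rfl⟩] <;>
    simp [hab, hbc, hca, hab.symm, hca.symm]

lemma totalCard_deleteEdges_add_one [Finite V] (hab : H.Adj a b) (hbc : H.Adj b c)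
    (hca : H.Adj c a) : (H.deleteEdges {s(a, b)}).totalCard + 1 = H.totalCard := by
  have hsupp : (H.deleteEdges {s(a, b)}).support = H.support := by
    refine (support_mono (deleteEdges_le _)).antisymm fun v hv => ?_
    obtain ⟨w, hw⟩ := H.mem_support.mp hv
    by_cases hvw : s(v, w) = s(a, b)
    · rcases Sym2.eq_iff.mp hvw with ⟨rfl, -⟩ | ⟨rfl, -⟩
      · refine (deleteEdges_adj.mpr ⟨hca.symm, ?_⟩).mem_support_left
        simp [hab.ne, hbc.ne']
      · refine (deleteEdges_adj.mpr ⟨hbc, ?_⟩).mem_support_left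
        simp [hca.ne, hab.ne']
    · exact (deleteEdges_adj.mpr ⟨hw, hvw⟩).mem_support_left
  rw [totalCard, totalCard, hsupp, edgeSet_deleteEdges, add_assoc,
    Set.ncard_sdiff_singleton_add_one (show s(a, b) ∈ H.edgeSet from hab)]

theorem exists_totalCard_eq [Finite V] (hG : G.Preconnected) (hab : G.Adj a b)
    (hbc : G.Adj b c) (hca : G.Adj c a) {t : ℕ} (ht : t = 3 ∨ 5 ≤ t) (htG : t ≤ G.totalCard) :
    ∃ H ≤ G, H.totalCard = t := by
  rcases ht with rfl | ht
  · exact ⟨edge a b, (edge_le_iff G).mpr (Or.inr hab), totalCard_edge hab.ne⟩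
  set K := edge a b ⊔ edge b c ⊔ edge c a with hK
  have hKG : K ≤ G := by
    simp only [hK, sup_le_iff, edge_le_iff]
    exact ⟨⟨Or.inr hab, Or.inr hbc⟩, Or.inr hca⟩
  have hKab : K.Adj a b := by simp [hK, edge_adj, hab.ne]
  obtain ⟨H, hKH, hHG, hlo, hhi⟩ := exists_le_totalCard_le hG hKG ⟨a, hKab.mem_support_left⟩
    (by rw [totalCard_triangle hab.ne hbc.ne hca.ne]; omega) htG
  rcases hlo.eq_or_lt with hHt | hHt
  · exact ⟨H, hHG, hHt.symm⟩
  refine ⟨H.deleteEdges {s(a, b)}, (deleteEdges_le _).trans hHG, ?_⟩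
  have := totalCard_deleteEdges_add_one (c := c) (hKH hKab) (hKH (by simp [hK, edge_adj, hbc.ne]))
    (hKH (by simp [hK, edge_adj, hca.ne]))
  omega

end Growth

section Cordial

variable [Fintype V] {G : SimpleGraph V}

theorem Preconnected.isTotalEdgeProductCordial_of_odd [Nontrivial V] (hG : G.Preconnected)
    (hodd : Odd (Nat.card V + G.edgeSet.ncard)) (h5 : 5 ≤ Nat.card V + G.edgeSet.ncard) :
    IsTotalEdgeProductCordial G := by
  obtain ⟨a, b, hab⟩ : ∃ a b, G.Adj a b :=
    ⟨_, G.mem_support.mp (hG.support_eq_univ ▸ Set.mem_univ (Classical.arbitrary V))⟩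
  obtain ⟨k, hk⟩ := hodd
  obtain ⟨H, -, hHG, hlo, hhi⟩ :=
    exists_le_totalCard_le (t := k) hG ((edge_le_iff G).mpr (Or.inr hab))
    ⟨a, (edge a b).mem_support.mpr ⟨b, by simp [edge_adj, hab.ne]⟩⟩
    (by rw [totalCard_edge hab.ne]; omega) (by rw [hG.totalCard_eq]; omega)
  refine isTotalEdgeProductCordial_of_le hHG (abs_le.mpr ⟨?_, ?_⟩) <;> omega

theorem Preconnected.isTotalEdgeProductCordial_of_even {a b c : V} (hG : G.Preconnected)
    (hab : G.Adj a b) (hbc : G.Adj b c) (hca : G.Adj c a)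
    (heven : Even (Nat.card V + G.edgeSet.ncard)) (h8 : Nat.card V + G.edgeSet.ncard ≠ 8) :
    IsTotalEdgeProductCordial G := by
  have : Nontrivial V := ⟨a, b, hab.ne⟩
  have h6 : 6 ≤ G.totalCard := by
    rw [← totalCard_triangle hab.ne hbc.ne hca.ne]
    exact totalCard_mono (by simp only [sup_le_iff, edge_le_iff]; tauto)
  obtain ⟨k, hk⟩ := heven
  obtain ⟨H, hHG, hHk⟩ := exists_totalCard_eq hG hab hbc hca (t := k)
    (by rw [hG.totalCard_eq] at h6; omega) (by rw [hG.totalCard_eq]; omega)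
  refine isTotalEdgeProductCordial_of_le hHG (abs_le.mpr ⟨?_, ?_⟩) <;> omega

end Cordial

section Corona

variable {α β : Type*} {G : SimpleGraph α} {H : SimpleGraph β}

@[simp] lemma corona_adj_inl_inl {u v : α} :
    (corona G H).Adj (.inl u) (.inl v) ↔ G.Adj u v := Iff.rfl

@[simp] lemma corona_adj_inl_inr {u i : α} {x : β} :
    (corona G H).Adj (.inl u) (.inr (i, x)) ↔ u = i := Iff.rfl

@[simp] lemma corona_adj_inr_inl {u i : α} {x : β} :
    (corona G H).Adj (.inr (i, x)) (.inl u) ↔ u = i := Iff.rfl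

@[simp] lemma corona_adj_inr_inr {i j : α} {x y : β} :
    (corona G H).Adj (.inr (i, x)) (.inr (j, y)) ↔ i = j ∧ H.Adj x y := Iff.rfl

lemma preconnected_corona (hG : G.Preconnected) : (corona G H).Preconnected := by
  have toHub : ∀ w, ∃ u, (corona G H).Reachable w (.inl u) := by
    rintro (u | ⟨i, x⟩)
    exacts [⟨u, .rfl⟩, ⟨i, (corona_adj_inr_inl.mpr rfl).reachable⟩]
  intro v w
  obtain ⟨u, hu⟩ := toHub v
  obtain ⟨u', hu'⟩ := toHub w
  exact hu.trans (((hG u u').map ⟨Sum.inl, id⟩).trans hu'.symm)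

variable [Fintype α] [Fintype β]

lemma degree_corona_inl (i : α) :
    (corona G H).degree (.inl i) = G.degree i + Fintype.card β := by
  simp only [← card_neighborFinset_eq_degree, neighborFinset_eq_filter, card_filter,
    Fintype.sum_sum_type, Fintype.sum_prod_type, corona_adj_inl_inl, corona_adj_inl_inr]
  simp

lemma degree_corona_inr (i : α) (x : β) :
    (corona G H).degree (.inr (i, x)) = H.degree x + 1 := by
  simp only [← card_neighborFinset_eq_degree, neighborFinset_eq_filter, card_filter,
    Fintype.sum_sum_type, Fintype.sum_prod_type, corona_adj_inr_inl, corona_adj_inr_inr]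
  simp [ite_and, add_comm]

lemma ncard_edgeSet_corona : (corona G H).edgeSet.ncard =
    G.edgeSet.ncard + Nat.card α * Nat.card β + Nat.card α * H.edgeSet.ncard := by
  have hsum := (corona G H).sum_degrees_eq_twice_card_edges
  simp only [Fintype.sum_sum_type, Fintype.sum_prod_type, degree_corona_inl, degree_corona_inr,
    sum_add_distrib, G.sum_degrees_eq_twice_card_edges, H.sum_degrees_eq_twice_card_edges,
    sum_const, card_univ, smul_eq_mul] at hsum
  simp only [← coe_edgeFinset, Set.ncard_coe_finset, Nat.card_eq_fintype_card]
  linarith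

end Corona

lemma ncard_edgeSet_pathGraph (n : ℕ) : (pathGraph (n + 1)).edgeSet.ncard = n := by
  have hrange : (pathGraph (n + 1)).edgeSet = Set.range fun k : Fin n => s(k.castSucc, k.succ) := by
    ext e
    induction e using Sym2.ind with
    | _ u v =>
      simp only [mem_edgeSet, pathGraph_adj, Set.mem_range, Sym2.eq_iff, Fin.ext_iff,
        Fin.val_castSucc, Fin.val_succ]
      constructor
      · rintro (h | h)
        exacts [⟨⟨u, by omega⟩, Or.inl ⟨rfl, h⟩⟩, ⟨⟨v, by omega⟩, Or.inr ⟨rfl, h⟩⟩]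
      · rintro ⟨k, ⟨hu, hv⟩ | ⟨hv, hu⟩⟩ <;> omega
  rw [hrange, Set.ncard_range_of_injective, Nat.card_eq_fintype_card, Fintype.card_fin]
  intro k l hkl
  simp only [Sym2.eq_iff, Fin.ext_iff, Fin.val_castSucc, Fin.val_succ] at hkl
  ext
  omega

end SimpleGraph

/-- For all positive integers `n` and `m` with not (`n = 1` and `m = 1`),
the corona graph `P_n ∘ P_m` is total edge product cordial. -/
theorem corona_path_path_isTotalEdgeProductCordial (n m : ℕ) (hn : 0 < n) (hm : 0 < m)
    (h : ¬ (n = 1 ∧ m = 1)) :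
    IsTotalEdgeProductCordial (corona (pathGraph n) (pathGraph m)) := by
  obtain ⟨n, rfl⟩ := Nat.exists_eq_add_one.mpr hn
  obtain ⟨m, rfl⟩ := Nat.exists_eq_add_one.mpr hm
  have hG := preconnected_corona (H := pathGraph (m + 1)) (pathGraph_preconnected (n + 1))
  have hN : Nat.card (Fin (n + 1) ⊕ Fin (n + 1) × Fin (m + 1)) +
      (corona (pathGraph (n + 1)) (pathGraph (m + 1))).edgeSet.ncard =
      3 * (n * m) + 4 * n + 3 * m + 3 := by
    simp only [ncard_edgeSet_corona, ncard_edgeSet_pathGraph, Nat.card_sum, Nat.card_prod,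
      Nat.card_fin]
    ring
  rcases Nat.even_or_odd (3 * (n * m) + 4 * n + 3 * m + 3) with heven | hodd
  · rcases m with _ | m
    · obtain ⟨r, hr⟩ := heven
      omega
    exact hG.isTotalEdgeProductCordial_of_even (a := .inl 0) (b := .inr (0, 0))
      (c := .inr (0, 1)) rfl ⟨rfl, by simp [pathGraph_adj]⟩ rfl (hN ▸ heven) (by omega)
  · have : Nontrivial (Fin (n + 1) ⊕ Fin (n + 1) × Fin (m + 1)) :=
      ⟨.inl 0, .inr (0, 0), Sum.inl_ne_inr⟩
    exact hG.isTotalEdgeProductCordial_of_odd (hN ▸ hodd) (by omega)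
end

section
/- Let n be an even positive integer and m ≥ 3 an integer. Then the corona graph P_n ∘ C_m admits an edge labeling f* : E(P_n ∘ C_m) → {0,1} whose induced vertex labeling f satisfies e_f(0) = (2nm + n − 2)/2, e_f(1) = (2nm + n)/2, and v_f(0) = v_f(1) = (n + nm)/2. In particular |(v_f(0) + e_f(0)) − (v_f(1) + e_f(1))| ≤ 1, so P_n ∘ C_m is total edge product cordial for even n and m ≥ 3. -/
open scoped Classical
open Finset SimpleGraph

/-!
Write `n = 2N` and label an edge `0` exactly when both of its ends lie over the first `N`
vertices of the path, i.e. are among those vertices or in their copies of `C_m`. Every vertex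
over that range has a neighbour over it (a path vertex in its cycle, a cycle vertex its hub), so
the vertices labelled `0` are exactly the `N(m + 1)` vertices over the range. The edges labelled
`0` are the `N - 1` path edges, `Nm` spokes and `Nm` cycle edges over the range; everything else,
including the path edge from vertex `N - 1` to vertex `N`, is labelled `1`, which makes
`e_f(1) = e_f(0) + 1`.
-/

section Labeling

variable {α : Type*}

theorem card_filter_eq_zero_add_card_filter_eq_one {ι : Type*} (s : Finset ι) {g : ι → ℕ}
    (hg : ∀ x ∈ s, g x = 0 ∨ g x = 1) : #{x ∈ s | g x = 0} + #{x ∈ s | g x = 1} = #s := by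
  rw [← card_filter_add_card_filter_not (s := s) (fun x => g x = 0)]
  congr 2
  refine filter_congr fun x hx => ?_
  have := hg x hx
  omega

noncomputable def insideLabel (s : Finset α) (e : Sym2 α) : ℕ :=
  if e ∈ s.sym2 then 0 else 1

theorem insideLabel_eq_zero_or_one (s : Finset α) (e : Sym2 α) :
    insideLabel s e = 0 ∨ insideLabel s e = 1 := by
  unfold insideLabel; split_ifs <;> simp

theorem insideLabel_eq_zero_iff {s : Finset α} {e : Sym2 α} :
    insideLabel s e = 0 ↔ e ∈ s.sym2 := by
  unfold insideLabel
  split_ifs with h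
  · exact iff_of_true rfl h
  · exact iff_of_false (by decide) h

variable [Fintype α] (G : SimpleGraph α)

theorem eCount_zero_add_eCount_one {f : Sym2 α → ℕ} (hf : ∀ e ∈ G.edgeSet, f e = 0 ∨ f e = 1) :
    eCount G f 0 + eCount G f 1 = #G.edgeFinset :=
  card_filter_eq_zero_add_card_filter_eq_one _ fun e he => hf e (mem_edgeFinset.mp he)

theorem inducedLabel_eq_zero_or_one {f : Sym2 α → ℕ} (hf : ∀ e ∈ G.edgeSet, f e = 0 ∨ f e = 1)
    (v : α) : inducedLabel G f v = 0 ∨ inducedLabel G f v = 1 :=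
  prod_induction _ (fun x => x = 0 ∨ x = 1) (by rintro _ _ (rfl | rfl) (rfl | rfl) <;> simp)
    (Or.inr rfl) fun u hu => hf _ (mem_filter.mp hu).2

theorem vCount_zero_add_vCount_one {f : Sym2 α → ℕ} (hf : ∀ e ∈ G.edgeSet, f e = 0 ∨ f e = 1) :
    vCount G f 0 + vCount G f 1 = Fintype.card α :=
  card_filter_eq_zero_add_card_filter_eq_one _ fun v _ => inducedLabel_eq_zero_or_one G hf v

theorem eCount_insideLabel_zero [DecidableEq α] (s : Finset α) :
    eCount G (insideLabel s) 0 = #(G.edgeFinset ∩ s.sym2) := by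
  simp only [eCount, insideLabel_eq_zero_iff, filter_mem_eq_inter]

theorem inducedLabel_insideLabel_eq_zero_iff {s : Finset α} (hs : ∀ v ∈ s, ∃ u ∈ s, G.Adj v u)
    (v : α) : inducedLabel G (insideLabel s) v = 0 ↔ v ∈ s := by
  simp only [inducedLabel, prod_eq_zero_iff, mem_filter, mem_univ, true_and,
    insideLabel_eq_zero_iff, mk_mem_sym2_iff]
  exact ⟨fun ⟨_, _, hv, _⟩ => hv, fun hv => (hs v hv).imp fun u ⟨hu, hvu⟩ => ⟨hvu, hv, hu⟩⟩

theorem vCount_insideLabel_zero {s : Finset α} (hs : ∀ v ∈ s, ∃ u ∈ s, G.Adj v u) :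
    vCount G (insideLabel s) 0 = #s := by
  simp only [vCount, inducedLabel_insideLabel_eq_zero_iff G hs, filter_univ_mem]

end Labeling

section Corona

variable {α β : Type*}

@[simp]
theorem corona_adj_inl_inl {G : SimpleGraph α} {H : SimpleGraph β} {i j : α} :
    (corona G H).Adj (Sum.inl i) (Sum.inl j) ↔ G.Adj i j := Iff.rfl

@[simp]
theorem corona_adj_inl_inr {G : SimpleGraph α} {H : SimpleGraph β} {i j : α} {y : β} :
    (corona G H).Adj (Sum.inl i) (Sum.inr (j, y)) ↔ i = j := Iff.rfl

@[simp]
theorem corona_adj_inr_inl {G : SimpleGraph α} {H : SimpleGraph β} {i j : α} {x : β} :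
    (corona G H).Adj (Sum.inr (i, x)) (Sum.inl j) ↔ j = i := Iff.rfl

@[simp]
theorem corona_adj_inr_inr {G : SimpleGraph α} {H : SimpleGraph β} {i j : α} {x y : β} :
    (corona G H).Adj (Sum.inr (i, x)) (Sum.inr (j, y)) ↔ i = j ∧ H.Adj x y := Iff.rfl

def coronaBlocks [Fintype β] (t : Finset α) : Finset (α ⊕ α × β) :=
  t.disjSum (t ×ˢ univ)

@[simp]
theorem inl_mem_coronaBlocks [Fintype β] {t : Finset α} {i : α} :
    (Sum.inl i : α ⊕ α × β) ∈ coronaBlocks t ↔ i ∈ t := by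
  simp [coronaBlocks]

@[simp]
theorem inr_mem_coronaBlocks [Fintype β] {t : Finset α} {p : α × β} :
    (Sum.inr p : α ⊕ α × β) ∈ coronaBlocks t ↔ p.1 ∈ t := by
  simp [coronaBlocks]

theorem card_coronaBlocks [Fintype β] (t : Finset α) :
    #(coronaBlocks t : Finset (α ⊕ α × β)) = #t + #t * Fintype.card β := by
  rw [coronaBlocks, card_disjSum, card_product, card_univ]

theorem coronaBlocks_univ [Fintype α] [Fintype β] :
    (coronaBlocks univ : Finset (α ⊕ α × β)) = univ := by
  ext (i | p) <;> simp

theorem exists_corona_adj_mem_coronaBlocks [Fintype β] [Nonempty β] (G : SimpleGraph α)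
    (H : SimpleGraph β) {t : Finset α} :
    ∀ v ∈ coronaBlocks t, ∃ u ∈ coronaBlocks t, (corona G H).Adj v u := by
  obtain ⟨x⟩ := ‹Nonempty β›
  rintro (i | ⟨i, y⟩) hv
  · exact ⟨Sum.inr (i, x), by simpa using hv, rfl⟩
  · exact ⟨Sum.inl i, by simpa using hv, rfl⟩

def coronaSpoke (p : α × β) : Sym2 (α ⊕ α × β) := s(Sum.inl p.1, Sum.inr p)

def coronaCopyEdge (q : α × Sym2 β) : Sym2 (α ⊕ α × β) := q.2.map fun x => Sum.inr (q.1, x)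

theorem coronaSpoke_injective : Function.Injective (coronaSpoke : α × β → _) := by
  intro p q h
  simp only [coronaSpoke, Sym2.eq_iff, Sum.inl.injEq, Sum.inr.injEq, reduceCtorEq, and_false,
    or_false] at h
  exact h.2

theorem coronaCopyEdge_injective : Function.Injective (coronaCopyEdge : α × Sym2 β → _) := by
  rintro ⟨i, e⟩ ⟨j, e'⟩ h
  induction e using Sym2.ind with | _ x y => ?_
  induction e' using Sym2.ind with | _ x' y' => ?_
  simp only [coronaCopyEdge, Sym2.map_mk, Sym2.eq_iff, Sum.inr.injEq, Prod.mk.injEq] at h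
  rcases h with ⟨⟨rfl, rfl⟩, -, rfl⟩ | ⟨⟨rfl, rfl⟩, -, rfl⟩
  · rfl
  · simp [Sym2.eq_swap]

variable [Fintype α] [Fintype β] (G : SimpleGraph α) (H : SimpleGraph β) [DecidableRel G.Adj]
  [DecidableRel H.Adj] [Fintype (corona G H).edgeSet]

theorem edgeFinset_corona_inter_sym2_coronaBlocks [DecidableEq α] [DecidableEq β] (t : Finset α) :
    (corona G H).edgeFinset ∩ (coronaBlocks t).sym2 =
      (G.edgeFinset ∩ t.sym2).image (Sym2.map Sum.inl) ∪
        (t ×ˢ univ).image coronaSpoke ∪ (t ×ˢ H.edgeFinset).image coronaCopyEdge := by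
  ext e
  induction e using Sym2.ind with | _ a b => ?_
  rcases a with i | ⟨i, x⟩ <;> rcases b with j | ⟨j, y⟩ <;>
    simp [coronaSpoke, coronaCopyEdge, Sym2.exists]
  · constructor
    · exact fun h => ⟨i, j, h, .inl ⟨rfl, rfl⟩⟩
    · rintro ⟨x, y, h, ⟨rfl, rfl⟩ | ⟨rfl, rfl⟩⟩
      exacts [h, ⟨h.1.symm, h.2.2, h.2.1⟩]
  · grind
  · grind
  · constructor
    · rintro ⟨⟨rfl, hxy⟩, hi, -⟩
      exact ⟨i, x, y, ⟨hi, hxy⟩, .inl ⟨⟨rfl, rfl⟩, rfl, rfl⟩⟩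
    · rintro ⟨a, x', y', ⟨ha, hxy⟩, ⟨⟨rfl, rfl⟩, rfl, rfl⟩ | ⟨⟨rfl, rfl⟩, rfl, rfl⟩⟩
      exacts [⟨⟨rfl, hxy⟩, ha, ha⟩, ⟨⟨rfl, hxy.symm⟩, ha, ha⟩]

theorem card_edgeFinset_corona_inter_sym2_coronaBlocks [DecidableEq α] [DecidableEq β]
    (t : Finset α) :
    #((corona G H).edgeFinset ∩ (coronaBlocks t).sym2) =
      #(G.edgeFinset ∩ t.sym2) + #t * Fintype.card β + #t * #H.edgeFinset := by
  have hAB : Disjoint ((G.edgeFinset ∩ t.sym2).image (Sym2.map Sum.inl))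
      ((t ×ˢ (univ : Finset β)).image coronaSpoke) := by
    simp [Finset.disjoint_left, coronaSpoke, Sym2.forall]
  have hC : Disjoint ((G.edgeFinset ∩ t.sym2).image (Sym2.map Sum.inl) ∪
      (t ×ˢ (univ : Finset β)).image coronaSpoke) ((t ×ˢ H.edgeFinset).image coronaCopyEdge) := by
    simp [Finset.disjoint_left, coronaSpoke, coronaCopyEdge, Sym2.forall]
  rw [edgeFinset_corona_inter_sym2_coronaBlocks, card_union_of_disjoint hC,
    card_union_of_disjoint hAB, card_image_of_injective _ (Sym2.map.injective Sum.inl_injective),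
    card_image_of_injective _ coronaSpoke_injective,
    card_image_of_injective _ coronaCopyEdge_injective, card_product, card_product,
    card_univ (α := β)]

theorem card_edgeFinset_corona :
    #(corona G H).edgeFinset =
      #G.edgeFinset + Fintype.card α * Fintype.card β + Fintype.card α * #H.edgeFinset := by
  classical
  simpa [coronaBlocks_univ, sym2_univ] using card_edgeFinset_corona_inter_sym2_coronaBlocks G H univ

end Corona

theorem card_edgeFinset_cycleGraph {m : ℕ} (hm : 3 ≤ m) : #(cycleGraph m).edgeFinset = m := by
  obtain ⟨k, rfl⟩ : ∃ k, m = k + 3 := ⟨m - 3, by omega⟩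
  have := sum_degrees_eq_twice_card_edges (cycleGraph (k + 3))
  simp only [cycleGraph_degree_three_le, sum_const, card_univ, Fintype.card_fin,
    smul_eq_mul] at this
  omega

theorem card_edgeFinset_pathGraph_inter_sym2 {n k : ℕ} (hk : k ≤ n) :
    #((pathGraph n).edgeFinset ∩ ({i | (i : ℕ) < k} : Finset (Fin n)).sym2) = k - 1 := by
  have hrungs : (pathGraph n).edgeFinset ∩ ({i | (i : ℕ) < k} : Finset (Fin n)).sym2 =
      (univ : Finset (Fin (k - 1))).image fun j => s(⟨j, by omega⟩, ⟨j + 1, by omega⟩) := by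
    ext e
    induction e using Sym2.ind with | _ u v => ?_
    simp only [mem_inter, mem_edgeFinset, mem_edgeSet, pathGraph_adj, mk_mem_sym2_iff, mem_filter,
      mem_univ, true_and, mem_image, Sym2.eq_iff, Fin.ext_iff]
    constructor
    · rintro ⟨h | h, hu, hv⟩
      exacts [⟨⟨u, by omega⟩, .inl ⟨rfl, h⟩⟩, ⟨⟨v, by omega⟩, .inr ⟨rfl, h⟩⟩]
    · rintro ⟨j, h⟩
      have := j.isLt
      omega
  rw [hrungs, card_image_of_injective, card_univ, Fintype.card_fin]
  intro a b h
  simp only [Sym2.eq_iff, Fin.ext_iff] at h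
  omega

theorem card_edgeFinset_pathGraph (n : ℕ) : #(pathGraph n).edgeFinset = n - 1 := by
  rw [← card_edgeFinset_pathGraph_inter_sym2 le_rfl, inter_eq_left.mpr]
  exact fun e _ => mem_sym2_iff.mpr fun v _ => by simp

theorem corona_path_cycle_even_counts_general (n m : ℕ) (hne : Even n) (hm : 3 ≤ m) :
    ∃ f : Sym2 (Fin n ⊕ Fin n × Fin m) → ℕ,
      (∀ e ∈ (corona (pathGraph n) (cycleGraph m)).edgeSet, f e = 0 ∨ f e = 1) ∧
      eCount (corona (pathGraph n) (cycleGraph m)) f 0 = (2 * n * m + n - 2) / 2 ∧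
      eCount (corona (pathGraph n) (cycleGraph m)) f 1 = (2 * n * m + n) / 2 ∧
      vCount (corona (pathGraph n) (cycleGraph m)) f 0 = (n + n * m) / 2 ∧
      vCount (corona (pathGraph n) (cycleGraph m)) f 1 = (n + n * m) / 2 ∧
      |((vCount (corona (pathGraph n) (cycleGraph m)) f 0 : ℤ) +
          (eCount (corona (pathGraph n) (cycleGraph m)) f 0 : ℤ)) -
        ((vCount (corona (pathGraph n) (cycleGraph m)) f 1 : ℤ) +
          (eCount (corona (pathGraph n) (cycleGraph m)) f 1 : ℤ))| ≤ 1 := by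
  obtain ⟨N, rfl⟩ := hne
  have : NeZero m := ⟨by omega⟩
  set t : Finset (Fin (N + N)) := {i | (i : ℕ) < N} with ht_def
  have ht : #t = N := by simp [t, Fin.card_filter_val_lt]
  set G := corona (pathGraph (N + N)) (cycleGraph m)
  set f := insideLabel (coronaBlocks (β := Fin m) t)
  have hf : ∀ e ∈ G.edgeSet, f e = 0 ∨ f e = 1 := fun e _ => insideLabel_eq_zero_or_one _ e
  have he0 : eCount G f 0 = (N - 1) + N * m + N * m := by
    rw [eCount_insideLabel_zero, card_edgeFinset_corona_inter_sym2_coronaBlocks, ht,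
      card_edgeFinset_cycleGraph hm, Fintype.card_fin, ht_def,
      card_edgeFinset_pathGraph_inter_sym2 (by omega)]
  have he : eCount G f 0 + eCount G f 1 = (N + N - 1) + (N + N) * m + (N + N) * m := by
    rw [eCount_zero_add_eCount_one _ hf, card_edgeFinset_corona, card_edgeFinset_pathGraph,
      card_edgeFinset_cycleGraph hm, Fintype.card_fin, Fintype.card_fin]
  have hv0 : vCount G f 0 = N + N * m := by
    rw [vCount_insideLabel_zero _ (exists_corona_adj_mem_coronaBlocks _ _), card_coronaBlocks, ht,
      Fintype.card_fin]
  have hv : vCount G f 0 + vCount G f 1 = (N + N) + (N + N) * m := by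
    simp [vCount_zero_add_vCount_one _ hf]
  -- `omega` treats `N * m` as an atom and must be told it vanishes when `N = 0`
  have hNm : N = 0 → N * m = 0 := fun h => by simp [h]
  refine ⟨f, hf, ?_, ?_, ?_, ?_, abs_le.mpr ⟨?_, ?_⟩⟩ <;>
    simp only [two_mul, add_mul] at he hv ⊢ <;> omega

/-- For even positive `n` and `m ≥ 3`, the corona graph `P_n ∘ C_m` admits an
edge labeling with `e_f(0) = (2nm + n - 2)/2`, `e_f(1) = (2nm + n)/2`,
`v_f(0) = v_f(1) = (n + nm)/2`; in particular it is total edge product cordial. -/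
theorem corona_path_cycle_even_counts (n m : ℕ) (hn : 0 < n) (hne : Even n) (hm : 3 ≤ m) :
    ∃ f : Sym2 (Fin n ⊕ Fin n × Fin m) → ℕ,
      (∀ e ∈ (corona (pathGraph n) (cycleGraph m)).edgeSet, f e = 0 ∨ f e = 1) ∧
      eCount (corona (pathGraph n) (cycleGraph m)) f 0 = (2 * n * m + n - 2) / 2 ∧
      eCount (corona (pathGraph n) (cycleGraph m)) f 1 = (2 * n * m + n) / 2 ∧
      vCount (corona (pathGraph n) (cycleGraph m)) f 0 = (n + n * m) / 2 ∧
      vCount (corona (pathGraph n) (cycleGraph m)) f 1 = (n + n * m) / 2 ∧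
      |((vCount (corona (pathGraph n) (cycleGraph m)) f 0 : ℤ) +
          (eCount (corona (pathGraph n) (cycleGraph m)) f 0 : ℤ)) -
        ((vCount (corona (pathGraph n) (cycleGraph m)) f 1 : ℤ) +
          (eCount (corona (pathGraph n) (cycleGraph m)) f 1 : ℤ))| ≤ 1 :=
  corona_path_cycle_even_counts_general n m hne hm
end
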